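/- For every integer m, the function a : SD₁₆ → ℤ determined by the group-ring element (1 + x + x² + x³ + x⁴ + x⁵ + x⁶ − x⁷ + m·h(x)) + y·(1 + x − x⁵ + x⁷ + m·h(x)) with h(x) = (x+1)(x²+1)(x⁴+1) — i.e., a(X^j) equals 1 + m for 0 ≤ j ≤ 6 and −1 + m for j = 7; and a(Y·X^j) equals 1 + m for j ∈ {0,1,7}, −1 + m for j = 5, and m for j ∈ {2,3,4,6} — has integer group determinant D_{SD₁₆}(a) = 2¹¹·(2m + 1). -/

import Mathlib

/-
The term `m·h(x)(1 + y)` is `m` times the sum of all group elements. Adding it to `c` multiplies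
the group determinant by `1 + |G| m / ε(c)`, where `ε(c) = ∑ c`: the group matrix gains the
rank-one term `m J` and has constant column sums `ε(c)`. Here `ε(c) = 8` and `|G| = 16`, so it
remains to see `D(c) = 2¹¹` for `m = 0`. Ordering `SD₁₆` as `⟨X⟩ ∪ Y⟨X⟩`, the group matrix is a
`2 × 2` block matrix of `ℤ/8`-circulants, which commute, so `D(c)` is the determinant of one
`8 × 8` circulant. Ordering `ℤ/2k` as evens then odds does the same for a `ℤ/2k`-circulant, and
three such halvings leave a `1 × 1` matrix.
-/

open SemidirectProduct

instance sdpFintype {N H : Type*} [Group N] [Group H] {φ : H →* MulAut N}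
    [Fintype N] [Fintype H] : Fintype (N ⋊[φ] H) :=
  Fintype.ofEquiv (N × H)
    ⟨fun p => ⟨p.1, p.2⟩, fun g => (g.left, g.right), fun _ => rfl, fun _ => rfl⟩

instance sdpDecEq {N H : Type*} [Group N] [Group H] {φ : H →* MulAut N}
    [DecidableEq N] [DecidableEq H] : DecidableEq (N ⋊[φ] H) := fun a b =>
  decidable_of_iff (a.left = b.left ∧ a.right = b.right)
    (by cases a; cases b; simp [SemidirectProduct.ext_iff])

/-- The integer group determinant of `a : G → ℤ`. -/
def groupDet {G : Type*} [Group G] [Fintype G] [DecidableEq G] (a : G → ℤ) : ℤ :=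
  Matrix.det (Matrix.of fun g h : G => a (g * h⁻¹))

/-- The additive automorphism of `ZMod m` given by multiplication by a self-inverse
element `c`, viewed as a multiplicative automorphism of `Multiplicative (ZMod m)`. -/
def mulBy {m : ℕ} (c : ZMod m) (hc : c * c = 1) :
    MulAut (Multiplicative (ZMod m)) where
  toFun x := Multiplicative.ofAdd (c * x.toAdd)
  invFun x := Multiplicative.ofAdd (c * x.toAdd)
  left_inv x := by simp [← mul_assoc, hc]
  right_inv x := by simp [← mul_assoc, hc]
  map_mul' x y := by simp [mul_add]

lemma mulBy_sq {m : ℕ} (c : ZMod m) (hc : c * c = 1) : (mulBy c hc) ^ 2 = 1 := by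
  ext x
  rw [sq]
  show (mulBy c hc) ((mulBy c hc) x) = x
  simp [mulBy, ← mul_assoc, hc]

/-- The homomorphism from `Multiplicative (ZMod 2)` sending the nontrivial element to a
given element of order dividing 2. -/
def homOfOrderTwo {G : Type*} [Group G] (g : G) (hg : g ^ 2 = 1) :
    Multiplicative (ZMod 2) →* G :=
  MonoidHom.mk' (fun x => g ^ (Multiplicative.toAdd x).val) (by
    intro a b
    show g ^ (Multiplicative.toAdd (a * b)).val =
      g ^ (Multiplicative.toAdd a).val * g ^ (Multiplicative.toAdd b).val
    have h : Multiplicative.toAdd (a * b) = Multiplicative.toAdd a + Multiplicative.toAdd b := rfl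
    rw [← pow_add, h, ZMod.val_add, ← pow_eq_pow_mod _ hg])

/-- The semidihedral group of order 16, realized as `(ZMod 8) ⋊ (ZMod 2)` where the
nontrivial element of `ZMod 2` acts by multiplication by 3. -/
abbrev SD16 : Type :=
  Multiplicative (ZMod 8) ⋊[homOfOrderTwo (mulBy (3 : ZMod 8) (by decide))
    (mulBy_sq _ _)] Multiplicative (ZMod 2)

/-- The generator `X` of order 8 of `SD16`. -/
def SD16.X : SD16 := inl (Multiplicative.ofAdd 1)

/-- The generator `Y` of order 2 of `SD16`. -/
def SD16.Y : SD16 := inr (Multiplicative.ofAdd 1)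

open Matrix Multiplicative

namespace Matrix
variable {R n : Type*} [CommRing R] [Fintype n] [DecidableEq n]

theorem det_fromBlocks_mul_det_of_commute (A B C D : Matrix n n R) (hCD : Commute C D) :
    (fromBlocks A B C D).det * D.det = (A * D - B * C).det * D.det := by
  have hmul : fromBlocks A B C D * fromBlocks D 0 (-C) 1 = fromBlocks (A * D - B * C) B 0 D := by
    simp [fromBlocks_multiply, hCD.eq, sub_eq_add_neg]
  simpa [det_fromBlocks_zero₁₂, det_fromBlocks_zero₂₁] using congrArg det hmul

open Polynomial in
/-- `det D` need not be a non-zero-divisor, so `D` is replaced by the characteristic matrix of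
`-D` over `R[X]`, whose determinant is monic, and `X` is specialised to `0` afterwards. -/
theorem det_fromBlocks_of_commute (A B C D : Matrix n n R) (hCD : Commute C D) :
    (fromBlocks A B C D).det = (A * D - B * C).det := by
  let φ : Matrix n n R →+* Matrix n n R[X] := (Polynomial.C : R →+* R[X]).mapMatrix
  have hcomm : Commute (φ C) (charmatrix (-D)) := by
    have h1 : Commute (φ C) (φ (-D)) := (hCD.neg_right).map φ
    have h2 : Commute (φ C) (scalar n (X : R[X])) :=
      (scalar_commute _ (fun _ => Commute.all _ _) _).symm
    exact h2.sub_right h1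
  have key := (charpoly_monic (-D)).isRegular.right
    (det_fromBlocks_mul_det_of_commute (φ A) (φ B) (φ C) _ hcomm)
  have := congrArg (Polynomial.evalRingHom (0 : R)) key
  rw [RingHom.map_det, RingHom.map_det] at this
  have hφ : ∀ M, (evalRingHom (0 : R)).mapMatrix (φ M) = M := fun M => by ext; simp [φ]
  have hD : (evalRingHom (0 : R)).mapMatrix (charmatrix (-D)) = D := by
    ext i j; by_cases h : i = j <;> simp [h]
  rwa [map_sub, map_mul, map_mul, hφ, hφ, hφ, hD, RingHom.mapMatrix_apply, fromBlocks_map,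
    ← RingHom.mapMatrix_apply, ← RingHom.mapMatrix_apply, ← RingHom.mapMatrix_apply,
    ← RingHom.mapMatrix_apply, hφ, hφ, hφ, hD] at this

theorem det_fromBlocks_circulant [AddCommGroup n] (u₁₁ u₁₂ u₂₁ u₂₂ : n → R) :
    (fromBlocks (circulant u₁₁) (circulant u₁₂) (circulant u₂₁) (circulant u₂₂)).det =
      (circulant (circulant u₁₁ *ᵥ u₂₂ - circulant u₁₂ *ᵥ u₂₁)).det := by
  rw [det_fromBlocks_of_commute _ _ _ _ (circulant_mul_comm u₂₁ u₂₂), circulant_sub, circulant_mul,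
    circulant_mul]

theorem mul_det_add_const_of_sum_col_eq (A : Matrix n n R) (s m : R) (hA : ∀ j, ∑ i, A i j = s) :
    s * (A + of fun _ _ => m).det = A.det * (s + Fintype.card n * m) := by
  rcases isEmpty_or_nonempty n with _ | ⟨⟨k⟩⟩
  · simp
  have hrow : ∀ (M : Matrix n n R) (t : R), (∀ j, ∑ i, M i j = t) →
      M.det = t * (M.updateRow k 1).det := by
    intro M t hM
    have hsum : ∑ i, (1 : n → R) i • M i = t • 1 := by
      ext j
      rw [Finset.sum_apply]
      simpa using hM j
    have := det_updateRow_sum M k 1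
    rw [hsum, det_updateRow_smul] at this
    simpa using this.symm
  have hshift : ((A + of fun _ _ => m).updateRow k 1).det = (A.updateRow k 1).det :=
    det_eq_of_forall_row_eq_smul_add_const (fun i => if i = k then 0 else m) k (by simp)
      fun i j => by by_cases h : i = k <;> simp [h, updateRow_apply]
  rw [hrow A s hA, hrow _ (s + Fintype.card n * m) (by simp [Finset.sum_add_distrib, hA]), hshift]
  ring

end Matrix

theorem groupDet_add_const {G : Type*} [Group G] [Fintype G] [DecidableEq G] (c : G → ℤ) (m : ℤ) :
    (∑ g, c g) * groupDet (fun g => c g + m) = groupDet c * (∑ g, c g + Fintype.card G * m) :=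
  mul_det_add_const_of_sum_col_eq _ _ _ fun h => Equiv.sum_comp (Equiv.mulRight h⁻¹) c

namespace ZMod

def doubleHom (n : ℕ) [NeZero n] : ZMod n →+ ZMod (2 * n) :=
  AddMonoidHom.mk' (fun k => ((2 * k.val : ℕ) : ZMod (2 * n))) fun a b => by
    rw [val_add, ← Nat.mul_mod_mul_left, natCast_mod]
    push_cast
    ring

theorem val_doubleHom {n : ℕ} [NeZero n] (k : ZMod n) : (doubleHom n k).val = 2 * k.val := by
  have := k.val_lt
  exact val_natCast_of_lt (by omega)

theorem val_doubleHom_add_one {n : ℕ} [NeZero n] (k : ZMod n) :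
    (doubleHom n k + 1).val = 2 * k.val + 1 := by
  have := k.val_lt
  have : ((2 * k.val + 1 : ℕ) : ZMod (2 * n)).val = 2 * k.val + 1 := val_natCast_of_lt (by omega)
  simpa [doubleHom] using this

noncomputable def sumEquivEvenOdd (n : ℕ) [NeZero n] : ZMod n ⊕ ZMod n ≃ ZMod (2 * n) :=
  Equiv.ofBijective (Sum.elim (doubleHom n) (doubleHom n · + 1)) <|
    (Fintype.bijective_iff_injective_and_card _).mpr ⟨by
      rintro (i | i) (j | j) h <;> have := congrArg val h <;>
        simp only [Sum.elim_inl, Sum.elim_inr, val_doubleHom, val_doubleHom_add_one] at this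
      · exact congrArg _ (val_injective n (by omega))
      · omega
      · omega
      · exact congrArg _ (val_injective n (by omega)), by simp [two_mul]⟩

theorem det_circulant_two_mul {n : ℕ} [NeZero n] {R : Type*} [CommRing R] (w : ZMod (2 * n) → R) :
    (circulant w).det = (circulant (circulant (w ∘ doubleHom n) *ᵥ (w ∘ doubleHom n) -
      circulant (fun k => w (doubleHom n k - 1)) *ᵥ (fun k => w (doubleHom n k + 1)))).det := by
  rw [← det_submatrix_equiv_self (sumEquivEvenOdd n), ← det_fromBlocks_circulant]
  congr 1
  ext (i | i) (j | j) <;>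
    simp only [sumEquivEvenOdd, Equiv.ofBijective_apply, submatrix_apply, Sum.elim_inl,
      Sum.elim_inr, fromBlocks_apply₁₁, fromBlocks_apply₁₂, fromBlocks_apply₂₁,
      fromBlocks_apply₂₂, circulant_apply, Function.comp_apply, map_sub] <;> congr 1 <;> abel

end ZMod

theorem homOfOrderTwo_ofAdd_one {G : Type*} [Group G] (g : G) (hg : g ^ 2 = 1) :
    homOfOrderTwo g hg (ofAdd 1) = g :=
  pow_one g

/-- The group `⟨x, y | xⁿ = y² = 1, y x y = xᶜ⟩`; `SD16` is the case `n = 8`, `c = 3`. -/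
abbrev CyclicSemidirectTwo (n : ℕ) (c : ZMod n) (hc : c * c = 1) : Type :=
  Multiplicative (ZMod n) ⋊[homOfOrderTwo (mulBy c hc) (mulBy_sq c hc)] Multiplicative (ZMod 2)

namespace CyclicSemidirectTwo
variable {n : ℕ} {c : ZMod n} {hc : c * c = 1}

def x (i : ZMod n) : CyclicSemidirectTwo n c hc := inl (ofAdd i)
def y : CyclicSemidirectTwo n c hc := inr (ofAdd 1)

theorem x_add (i j : ZMod n) : (x (i + j) : CyclicSemidirectTwo n c hc) = x i * x j := by
  simp [x]

theorem x_neg (i : ZMod n) : (x (-i) : CyclicSemidirectTwo n c hc) = (x i)⁻¹ := by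
  simp [x]

theorem y_inv : (y : CyclicSemidirectTwo n c hc)⁻¹ = y := by
  rw [y, ← map_inv]
  rfl

theorem y_mul_x_mul_y (i : ZMod n) : (y * x i * y : CyclicSemidirectTwo n c hc) = x (c * i) := by
  calc y * x i * y = y * x i * y⁻¹ := by rw [y_inv]
    _ = x (c * i) := by
      rw [x, x, y, ← map_inv, ← inl_aut, homOfOrderTwo_ofAdd_one]
      rfl

theorem x_one_pow (k : ℕ) : (x 1 : CyclicSemidirectTwo n c hc) ^ k = x k := by
  simp [x, ← map_pow, ← ofAdd_nsmul]

theorem y_mul_y : (y * y : CyclicSemidirectTwo n c hc) = 1 := by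
  conv_lhs => arg 2; rw [← y_inv]
  exact mul_inv_cancel y

theorem y_mul_x (i : ZMod n) : (y * x i : CyclicSemidirectTwo n c hc) = x (c * i) * y := by
  rw [← y_mul_x_mul_y, mul_assoc _ y, y_mul_y, mul_one]

theorem x_mul_inv_x (i j : ZMod n) : (x i * (x j)⁻¹ : CyclicSemidirectTwo n c hc) = x (i - j) := by
  rw [← x_neg, ← x_add, sub_eq_add_neg]

theorem x_mul_inv_y_mul_x (i j : ZMod n) :
    (x i * (y * x j)⁻¹ : CyclicSemidirectTwo n c hc) = y * x (c * (i - j)) := by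
  rw [← y_mul_x_mul_y, _root_.mul_inv_rev, y_inv, ← mul_assoc, x_mul_inv_x, ← mul_assoc,
    ← mul_assoc, y_mul_y, one_mul]

theorem y_mul_x_mul_inv_x (i j : ZMod n) :
    (y * x i * (x j)⁻¹ : CyclicSemidirectTwo n c hc) = y * x (i - j) := by
  rw [mul_assoc, x_mul_inv_x]

theorem y_mul_x_mul_inv_y_mul_x (i j : ZMod n) :
    (y * x i * (y * x j)⁻¹ : CyclicSemidirectTwo n c hc) = x (c * (i - j)) := by
  rw [mul_assoc, x_mul_inv_y_mul_x, ← mul_assoc, y_mul_y, one_mul]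

def sumEquiv : ZMod n ⊕ ZMod n ≃ CyclicSemidirectTwo n c hc where
  toFun := Sum.elim x (fun i => y * x i)
  invFun g := if g.right = 1 then Sum.inl (toAdd g.left) else Sum.inr (c * toAdd g.left)
  left_inv := by
    rintro (i | i)
    · simp [x]
    · simp only [y, x, Sum.elim_inr, mul_right, right_inr, right_inl, mul_one, ofAdd_eq_one,
        one_ne_zero, ↓reduceIte, mul_left, left_inr, homOfOrderTwo_ofAdd_one, left_inl, one_mul,
        Sum.inr.injEq]
      show c * (c * i) = i
      rw [← mul_assoc, hc, one_mul]
  right_inv := by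
    rintro ⟨l, r⟩
    obtain rfl | rfl : r = 1 ∨ r = ofAdd 1 := by revert r; decide
    · simp [x]
    · simp only [show (ofAdd 1 : Multiplicative (ZMod 2)) ≠ 1 by decide, if_false,
        Sum.elim_inr]
      rw [y_mul_x, ← mul_assoc, hc, one_mul]
      ext <;> simp [x, y]

theorem sum_univ_eq {M : Type*} [AddCommMonoid M] [NeZero n] (f : CyclicSemidirectTwo n c hc → M) :
    ∑ g, f g = ∑ i, f (x i) + ∑ i, f (y * x i) := by
  rw [← sumEquiv.sum_comp, Fintype.sum_sum_type]
  rfl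

theorem groupDet_eq_det_circulant [NeZero n] (a : CyclicSemidirectTwo n c hc → ℤ) :
    groupDet a = (circulant (circulant (fun i => a (x i)) *ᵥ (fun i => a (x (c * i))) -
      circulant (fun i => a (y * x (c * i))) *ᵥ (fun i => a (y * x i)))).det := by
  rw [groupDet, ← det_submatrix_equiv_self sumEquiv, ← det_fromBlocks_circulant]
  congr 1
  ext (i | i) (j | j) <;>
    simp only [sumEquiv, Equiv.coe_fn_mk, submatrix_apply, of_apply, Sum.elim_inl, Sum.elim_inr,
      fromBlocks_apply₁₁, fromBlocks_apply₁₂, fromBlocks_apply₂₁, fromBlocks_apply₂₂,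
      circulant_apply, x_mul_inv_x, x_mul_inv_y_mul_x, y_mul_x_mul_inv_x, y_mul_x_mul_inv_y_mul_x]

end CyclicSemidirectTwo

namespace SD16

open CyclicSemidirectTwo

theorem X_pow_coe (j : Fin 8) : SD16.X ^ (j : ℕ) = x j := by
  rw [show SD16.X = x 1 from rfl, x_one_pow]
  exact congrArg x (ZMod.natCast_zmod_val (n := 8) j)

section
variable (c : SD16 → ℤ)

theorem sum_eq_eight (hx : ∀ i : ZMod 8, c (x i) = ![1, 1, 1, 1, 1, 1, 1, -1] i)
    (hy : ∀ i : ZMod 8, c (y * x i) = ![1, 1, 0, 0, 0, -1, 0, 1] i) : ∑ g, c g = 8 := by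
  rw [sum_univ_eq]
  simp only [hx, hy]
  decide

theorem groupDet_eq_two_pow_eleven (hx : ∀ i : ZMod 8, c (x i) = ![1, 1, 1, 1, 1, 1, 1, -1] i)
    (hy : ∀ i : ZMod 8, c (y * x i) = ![1, 1, 0, 0, 0, -1, 0, 1] i) : groupDet c = 2 ^ 11 := by
  rw [groupDet_eq_det_circulant]
  simp only [hx, hy]
  refine (ZMod.det_circulant_two_mul (n := 4) _).trans ?_
  refine (ZMod.det_circulant_two_mul (n := 2) _).trans ?_
  refine (ZMod.det_circulant_two_mul (n := 1) _).trans ?_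
  rw [det_unique]
  decide

end

end SD16

open CyclicSemidirectTwo in
/-- the element
`(1 + x + x² + x³ + x⁴ + x⁵ + x⁶ − x⁷ + m·h(x)) + y(1 + x − x⁵ + x⁷ + m·h(x))` has
group determinant `2¹¹(2m + 1)`. -/
theorem sd16_det_two_pow_eleven (m : ℤ) (a : SD16 → ℤ)
    (ha : ∀ j : Fin 8, a (SD16.X ^ (j : ℕ)) =
      ![1 + m, 1 + m, 1 + m, 1 + m, 1 + m, 1 + m, 1 + m, -1 + m] j)
    (hb : ∀ j : Fin 8, a (SD16.Y * SD16.X ^ (j : ℕ)) =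
      ![1 + m, 1 + m, m, m, m, -1 + m, m, 1 + m] j) :
    groupDet a = 2 ^ 11 * (2 * m + 1) := by
  have hx : ∀ i : ZMod 8, a (x i) - m = ![1, 1, 1, 1, 1, 1, 1, -1] i := fun i => by
    rw [← SD16.X_pow_coe i, ha i]
    fin_cases i <;> simp
  have hy : ∀ i : ZMod 8, a (y * x i) - m = ![1, 1, 0, 0, 0, -1, 0, 1] i := fun i => by
    rw [← SD16.X_pow_coe i, show (y : SD16) = SD16.Y from rfl, hb i]
    fin_cases i <;> simp
  have key := groupDet_add_const (fun g => a g - m) m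
  rw [SD16.sum_eq_eight (fun g => a g - m) hx hy,
    SD16.groupDet_eq_two_pow_eleven (fun g => a g - m) hx hy,
    show (fun g => a g - m + m) = a from funext fun g => sub_add_cancel _ _,
    show Fintype.card SD16 = 16 from rfl] at key
  push_cast at key
  linarith
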